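/- In the endomorphism monoid End₁ of the regular representation (RF₁, F₁) of the infinite cyclic group F₁ = ⟨x⟩ over a commutative ring R: an endomorphism ν_{(w,e)} with w = Σ rₙxⁿ satisfying Σ rₙ = 1 is a right unit of the ideal T_e (i.e., ν ∘ ν_{(w,e)} = ν for every ν ∈ T_e). -/

import Mathlib

open LaurentPolynomial

/-!
An endomorphism `ν` with `ν.φ = 0` satisfies `ν.f (a * xⁿ) = ν.f a`, so by linearity
`ν.f a = ε(a) • ν.f 1`, where `ε` is the augmentation: every `ν ∈ T_e` factors through `ε`.
For `u = ν_{(w,e)}` this gives `ε (u.f a) = ε a * ε w = ε a`, hence `z.f (u.f a) = z.f a`.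
-/

/-- An endomorphism of the regular representation `(W₁, F₁) = (RF₁, F₁)` of the infinite cyclic
group `F₁ = ⟨x⟩` over `R`: an `R`-linear endomorphism `f` of the group algebra
`RF₁ = R[T;T⁻¹]` together with an endomorphism `φ` of the (additively written) infinite cyclic
group `ℤ`, compatible with the action of the group by multiplication. -/
structure End1 (R : Type*) [CommRing R] where
  f : LaurentPolynomial R →ₗ[R] LaurentPolynomial R
  φ : ℤ →+ ℤ
  compat : ∀ (a : LaurentPolynomial R) (n : ℤ), f (a * T n) = f a * T (φ n)

variable {R : Type*} [CommRing R]

/-- Composition of endomorphisms makes `End1 R` a monoid; `ν ∘ μ` has components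
`ν.f ∘ μ.f` and `ν.φ ∘ μ.φ`. -/
noncomputable instance : Mul (End1 R) :=
  ⟨fun z u => ⟨z.f ∘ₗ u.f, z.φ.comp u.φ, fun a n => by
    simp [LinearMap.comp_apply, u.compat, z.compat]⟩⟩

/-- The identity endomorphism `ν_{(1,x)}`. -/
noncomputable instance : One (End1 R) :=
  ⟨⟨LinearMap.id, AddMonoidHom.id ℤ, fun a n => rfl⟩⟩

namespace LaurentPolynomial

noncomputable def augmentation : R[T;T⁻¹] →ₗ[R] R :=
  Finsupp.lsum R (fun _ => LinearMap.id) ∘ₗ (AddMonoidAlgebra.coeffLinearEquiv R).toLinearMap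

theorem augmentation_apply (w : R[T;T⁻¹]) :
    augmentation w = (AddMonoidAlgebra.coeff w).sum fun _ r => r :=
  rfl

@[simp]
theorem augmentation_T (n : ℤ) : augmentation (T n : R[T;T⁻¹]) = 1 := by
  rw [T, augmentation_apply, AddMonoidAlgebra.coeff_single, Finsupp.sum_single_index rfl]

end LaurentPolynomial

namespace End1

@[ext]
theorem ext {ν μ : End1 R} (hf : ν.f = μ.f) (hφ : ν.φ = μ.φ) : ν = μ := by
  cases ν; cases μ; congr

@[simp]
theorem mul_φ (ν μ : End1 R) : (ν * μ).φ = ν.φ.comp μ.φ :=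
  rfl

variable {ν : End1 R}

theorem f_T_of_φ_eq_zero (hν : ν.φ = 0) (n : ℤ) : ν.f (T n) = ν.f 1 := by
  simpa [hν] using ν.compat 1 n

theorem f_eq_augmentation_smul (hν : ν.φ = 0) (w : R[T;T⁻¹]) :
    ν.f w = augmentation w • ν.f 1 := by
  induction w using LaurentPolynomial.induction_on' with
  | add p q hp hq => rw [map_add, map_add, hp, hq, add_smul]
  | C_mul_T n r => rw [← smul_eq_C_mul, map_smul, map_smul, f_T_of_φ_eq_zero hν, augmentation_T,
      smul_eq_mul, mul_one]

theorem augmentation_f (hν : ν.φ = 0) (a : R[T;T⁻¹]) :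
    augmentation (ν.f a) = augmentation a * augmentation (ν.f 1) := by
  rw [f_eq_augmentation_smul hν, map_smul, smul_eq_mul]

theorem f_eq_f_of_augmentation_eq (hν : ν.φ = 0) {a b : R[T;T⁻¹]}
    (h : augmentation a = augmentation b) : ν.f a = ν.f b := by
  rw [f_eq_augmentation_smul hν, h, ← f_eq_augmentation_smul hν]

end End1

/-- In `End₁`, an endomorphism `ν_{(w,e)}` whose element `w = Σ rₙxⁿ` has augmentation
`Σ rₙ = 1` is a right unit of the ideal `T_e`: `ν ∘ ν_{(w,e)} = ν` for every `ν ∈ T_e`. -/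
theorem stmt11 (u : End1 R) (hu : u.φ = 0)
    (haug : ((AddMonoidAlgebra.coeff (u.f 1 : LaurentPolynomial R)).sum fun _ r => r) = 1)
    (z : End1 R) (hz : z.φ = 0) :
    z * u = z := by
  rw [← augmentation_apply] at haug
  ext1
  · exact LinearMap.ext fun a =>
      z.f_eq_f_of_augmentation_eq hz (by rw [u.augmentation_f hu, haug, mul_one])
  · rw [End1.mul_φ, hz, AddMonoidHom.zero_comp]
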